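/- Let C > 0, v ≥ 0, ψ > 0 and EL with 0 < EL < 1. Define f : ℝ → ℝ by f(θ) = (1+v)·C·Φ((log((1+v)·C) − θ)/ψ) − exp(θ + ψ²/2)·Φ((log((1+v)·C) − θ)/ψ − ψ). Then there is exactly one θ ∈ ℝ such that f(θ) = (1+v)·C·EL. -/

import Mathlib

open Real

/-- The standard normal density `φ(u) = (2π)^{-1/2} exp(-u²/2)`. -/
noncomputable def stdNormalPDF (u : ℝ) : ℝ := (Real.sqrt (2 * Real.pi))⁻¹ * Real.exp (-u ^ 2 / 2)

/-- The standard normal cumulative distribution function `Φ`. -/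
noncomputable def stdNormalCDF (x : ℝ) : ℝ := ∫ u in Set.Iic x, stdNormalPDF u

open MeasureTheory Filter Set Topology

lemma stdNormalPDF_pos (u : ℝ) : 0 < stdNormalPDF u :=
  mul_pos (inv_pos.2 (Real.sqrt_pos.2 (by positivity))) (Real.exp_pos _)

lemma stdNormalPDF_continuous : Continuous stdNormalPDF := by
  unfold stdNormalPDF; fun_prop

lemma stdNormalPDF_integrable : Integrable stdNormalPDF := by
  have h := (integrable_exp_neg_mul_sq (by norm_num : (0:ℝ) < 1/2)).const_mul
    ((Real.sqrt (2 * Real.pi))⁻¹)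
  refine h.congr (Eventually.of_forall fun u => ?_)
  unfold stdNormalPDF; ring_nf

lemma integral_stdNormalPDF : ∫ u, stdNormalPDF u = 1 := by
  have h : ∫ u, stdNormalPDF u
      = (Real.sqrt (2 * Real.pi))⁻¹ * ∫ u : ℝ, Real.exp (-(1/2 : ℝ) * u ^ 2) := by
    rw [← integral_const_mul]
    congr 1; funext u; unfold stdNormalPDF; ring_nf
  rw [h, integral_gaussian, show (π / (1/2 : ℝ)) = 2 * π by ring]
  exact inv_mul_cancel₀ (ne_of_gt (Real.sqrt_pos.2 (by positivity)))

lemma stdNormalCDF_nonneg (x : ℝ) : 0 ≤ stdNormalCDF x :=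
  integral_nonneg fun u => (stdNormalPDF_pos u).le

lemma stdNormalCDF_le_one (x : ℝ) : stdNormalCDF x ≤ 1 := by
  rw [← integral_stdNormalPDF]
  exact setIntegral_le_integral stdNormalPDF_integrable
    (Eventually.of_forall fun u => (stdNormalPDF_pos u).le)

lemma stdNormalCDF_tendsto_atTop : Tendsto stdNormalCDF atTop (𝓝 1) := by
  have h := tendsto_setIntegral_of_monotone (μ := volume) (s := fun x : ℝ => Iic x)
    (f := stdNormalPDF) (fun i => measurableSet_Iic)
    (fun a b hab => Iic_subset_Iic.2 hab)
    (by rw [iUnion_Iic]; exact stdNormalPDF_integrable.integrableOn)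
  exact (by simpa [iUnion_Iic, integral_stdNormalPDF] using h :
    Tendsto (fun i => ∫ x in Iic i, stdNormalPDF x) atTop (𝓝 1))

lemma stdNormalCDF_tendsto_atBot : Tendsto stdNormalCDF atBot (𝓝 0) := by
  have h := tendsto_setIntegral_of_antitone (μ := volume) (s := fun x : ℝ => Iic (-x))
    (f := stdNormalPDF) (fun i => measurableSet_Iic)
    (fun a b hab => Iic_subset_Iic.2 (neg_le_neg hab))
    ⟨0, stdNormalPDF_integrable.integrableOn⟩
  have h2 : ⋂ x : ℝ, Iic (-x) = (∅ : Set ℝ) := by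
    ext y
    simp only [mem_iInter, mem_Iic, mem_empty_iff_false, iff_false, not_forall, not_le]
    exact ⟨-(y - 1), by linarith⟩
  rw [h2] at h
  simp only [Measure.restrict_empty, integral_zero_measure] at h
  have h3 := h.comp tendsto_neg_atBot_atTop
  exact h3.congr fun y => by simp [Function.comp, stdNormalCDF]

lemma stdNormalCDF_pos (x : ℝ) : 0 < stdNormalCDF x := by
  have key : stdNormalCDF x - stdNormalCDF (x - 1)
      = ∫ u in (x - 1)..x, stdNormalPDF u :=
    intervalIntegral.integral_Iic_sub_Iic stdNormalPDF_integrable.integrableOn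
      stdNormalPDF_integrable.integrableOn
  have hpos : 0 < ∫ u in (x - 1)..x, stdNormalPDF u :=
    intervalIntegral.intervalIntegral_pos_of_pos (stdNormalPDF_continuous.intervalIntegrable _ _)
      stdNormalPDF_pos (by linarith)
  have := stdNormalCDF_nonneg (x - 1)
  linarith

lemma stdNormalCDF_hasDerivAt (x : ℝ) : HasDerivAt stdNormalCDF (stdNormalPDF x) x := by
  have hfun : stdNormalCDF = fun y => stdNormalCDF 0 + ∫ u in (0:ℝ)..y, stdNormalPDF u := by
    funext y
    have := intervalIntegral.integral_Iic_sub_Iic (a := (0:ℝ)) (b := y)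
      stdNormalPDF_integrable.integrableOn stdNormalPDF_integrable.integrableOn
    unfold stdNormalCDF at *
    linarith
  rw [hfun]
  exact (intervalIntegral.integral_hasDerivAt_right
    (stdNormalPDF_continuous.intervalIntegrable _ _)
    (stdNormalPDF_continuous.stronglyMeasurableAtFilter _ _)
    stdNormalPDF_continuous.continuousAt).const_add _

/-- For `C > 0`, `v ≥ 0`, `ψ > 0` and `0 < EL < 1`, the equation
`f(θ) = (1+v)·C·EL`, with
`f(θ) = (1+v)·C·Φ((log((1+v)·C) - θ)/ψ) - exp(θ + ψ²/2)·Φ((log((1+v)·C) - θ)/ψ - ψ)`,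
has exactly one solution `θ ∈ ℝ`. -/
theorem existsUnique_adjusted_encumbrance (C v ψ EL : ℝ) (hC : 0 < C) (hv : 0 ≤ v)
    (hψ : 0 < ψ) (hEL0 : 0 < EL) (hEL1 : EL < 1) :
    ∃! θ : ℝ,
      (1 + v) * C * stdNormalCDF ((Real.log ((1 + v) * C) - θ) / ψ)
        - Real.exp (θ + ψ ^ 2 / 2) * stdNormalCDF ((Real.log ((1 + v) * C) - θ) / ψ - ψ)
      = (1 + v) * C * EL := by
  set K : ℝ := (1 + v) * C with hKdef
  have hK : 0 < K := by positivity
  set L : ℝ := Real.log K with hLdef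
  set f : ℝ → ℝ := fun θ =>
    K * stdNormalCDF ((L - θ) / ψ) - Real.exp (θ + ψ ^ 2 / 2) * stdNormalCDF ((L - θ) / ψ - ψ)
    with hfdef
  -- derivative of f
  have hderiv : ∀ θ : ℝ,
      HasDerivAt f (-(Real.exp (θ + ψ ^ 2 / 2) * stdNormalCDF ((L - θ) / ψ - ψ))) θ := by
    intro θ
    set x : ℝ := (L - θ) / ψ with hxdef
    have h1 : HasDerivAt (fun θ : ℝ => (L - θ) / ψ) (-1 / ψ) θ := by
      simpa using ((hasDerivAt_id θ).const_sub L).div_const ψ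
    have h2 : HasDerivAt (fun θ : ℝ => stdNormalCDF ((L - θ) / ψ))
        (stdNormalPDF x * (-1 / ψ)) θ :=
      by have := (stdNormalCDF_hasDerivAt x).comp θ h1; exact this
    have h3 : HasDerivAt (fun θ : ℝ => stdNormalCDF ((L - θ) / ψ - ψ))
        (stdNormalPDF (x - ψ) * (-1 / ψ)) θ :=
      by have := (stdNormalCDF_hasDerivAt (x - ψ)).comp θ (h1.sub_const ψ); exact this
    have h4 : HasDerivAt (fun θ : ℝ => Real.exp (θ + ψ ^ 2 / 2))
        (Real.exp (θ + ψ ^ 2 / 2)) θ := by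
      simpa using ((hasDerivAt_id θ).add_const (ψ ^ 2 / 2)).exp
    have h5 := (h2.const_mul K).sub (h4.mul h3)
    have hxψ : x * ψ = L - θ := div_mul_cancel₀ _ (ne_of_gt hψ)
    have key : K * stdNormalPDF x = Real.exp (θ + ψ ^ 2 / 2) * stdNormalPDF (x - ψ) := by
      unfold stdNormalPDF
      rw [← Real.exp_log hK, ← hLdef]
      rw [show Real.exp L * ((Real.sqrt (2 * Real.pi))⁻¹ * Real.exp (-x ^ 2 / 2))
          = (Real.sqrt (2 * Real.pi))⁻¹ * (Real.exp L * Real.exp (-x ^ 2 / 2)) by ring,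
        show Real.exp (θ + ψ ^ 2 / 2) * ((Real.sqrt (2 * Real.pi))⁻¹
            * Real.exp (-(x - ψ) ^ 2 / 2))
          = (Real.sqrt (2 * Real.pi))⁻¹
            * (Real.exp (θ + ψ ^ 2 / 2) * Real.exp (-(x - ψ) ^ 2 / 2)) by ring,
        ← Real.exp_add, ← Real.exp_add]
      congr 1
      rw [Real.exp_eq_exp]
      nlinarith [hxψ]
    convert h5 using 1
    case e'_4 => rfl
    case e'_5 => rfl
    case e'_8 => rfl
    have : K * (stdNormalPDF x * (-1 / ψ))
        = Real.exp (θ + ψ ^ 2 / 2) * (stdNormalPDF (x - ψ) * (-1 / ψ)) := by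
      rw [show K * (stdNormalPDF x * (-1 / ψ)) = (K * stdNormalPDF x) * (-1/ψ) by ring, key]
      ring
    rw [this]; ring
  have hanti : StrictAnti f := by
    apply strictAnti_of_hasDerivAt_neg (f' := fun θ =>
      -(Real.exp (θ + ψ ^ 2 / 2) * stdNormalCDF ((L - θ) / ψ - ψ))) hderiv
    intro θ
    have := stdNormalCDF_pos ((L - θ) / ψ - ψ)
    have := Real.exp_pos (θ + ψ ^ 2 / 2)
    nlinarith
  have hcont : Continuous f :=
    continuous_iff_continuousAt.2 fun θ => (hderiv θ).continuousAt
  -- limit at -∞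
  have hx_bot : Tendsto (fun θ : ℝ => (L - θ) / ψ) atBot atTop := by
    apply Tendsto.atTop_div_const hψ
    exact (tendsto_atTop_add_const_left atBot L tendsto_neg_atBot_atTop).congr
      fun y => (sub_eq_add_neg L y).symm
  have hx_top : Tendsto (fun θ : ℝ => (L - θ) / ψ) atTop atBot := by
    apply Tendsto.atBot_div_const hψ
    exact (tendsto_atBot_add_const_left atTop L tendsto_neg_atTop_atBot).congr
      fun y => (sub_eq_add_neg L y).symm
  have hterm1_bot : Tendsto (fun θ : ℝ => K * stdNormalCDF ((L - θ) / ψ)) atBot (𝓝 K) := by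
    have := (stdNormalCDF_tendsto_atTop.comp hx_bot).const_mul K
    simpa using this
  have hexp_bot : Tendsto (fun θ : ℝ => Real.exp (θ + ψ ^ 2 / 2)) atBot (𝓝 0) :=
    Real.tendsto_exp_atBot.comp (tendsto_atBot_add_const_right atBot _ tendsto_id)
  have hterm2_bot : Tendsto
      (fun θ : ℝ => Real.exp (θ + ψ ^ 2 / 2) * stdNormalCDF ((L - θ) / ψ - ψ)) atBot (𝓝 0) := by
    apply squeeze_zero
      (fun θ => mul_nonneg (Real.exp_pos _).le (stdNormalCDF_nonneg _)) (fun θ => ?_) hexp_bot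
    have h1 := stdNormalCDF_le_one ((L - θ) / ψ - ψ)
    have h2 := Real.exp_pos (θ + ψ ^ 2 / 2)
    nlinarith
  have hf_bot : Tendsto f atBot (𝓝 K) := by
    have := hterm1_bot.sub hterm2_bot
    simpa using this
  -- existence of points above/below the target value
  have hKEL : K * EL < K := by nlinarith
  have hKEL0 : 0 < K * EL := by positivity
  obtain ⟨θ₁, hθ₁⟩ := (hf_bot.eventually (eventually_gt_nhds hKEL)).exists
  have hub_top : Tendsto (fun θ : ℝ => K * stdNormalCDF ((L - θ) / ψ)) atTop (𝓝 0) := by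
    have := (stdNormalCDF_tendsto_atBot.comp hx_top).const_mul K
    simpa using this
  obtain ⟨θ₂, hθ₂⟩ := (hub_top.eventually (eventually_lt_nhds hKEL0)).exists
  have hθ₂' : f θ₂ < K * EL := by
    have h2 : 0 ≤ Real.exp (θ₂ + ψ ^ 2 / 2) * stdNormalCDF ((L - θ₂) / ψ - ψ) :=
      mul_nonneg (Real.exp_pos _).le (stdNormalCDF_nonneg _)
    have : f θ₂ ≤ K * stdNormalCDF ((L - θ₂) / ψ) := by
      rw [hfdef]; dsimp only; linarith
    exact lt_of_le_of_lt this hθ₂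
  have hθlt : θ₁ < θ₂ := by
    by_contra h
    push_neg at h
    have : f θ₁ ≤ f θ₂ := hanti.antitone h
    linarith
  obtain ⟨θ, hθmem, hθeq⟩ := intermediate_value_Icc' hθlt.le hcont.continuousOn
    ⟨hθ₂'.le, hθ₁.le⟩
  exact ⟨θ, hθeq, fun θ' hθ' => hanti.injective (hθ'.trans hθeq.symm)⟩
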